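/- Let p be a prime with p ≡ 2 or 3 (mod 5) and r a positive integer. The rank-metric code φ_O((F_{p²})^r) ⊆ M_{2×2r}(F_p), which has dimension ρ = 2r and minimum rank distance δ = 2, attains the Singleton bound for rank-metric codes: ρ = min{2(2r − δ + 1), 2r(2 − δ + 1)} = 2r. Hence it is a maximum rank distance (MRD) code. -/

import Mathlib

/-!
Every nonzero codeword `φ(c + dω)` contains a nonzero block `[[d, c], [c + d, d]]`, whose
determinant `d² - cd - c²` vanishes only if `d / c` is a root of `X² - X - 1`. A root would make
`5 = (2x - 1)²` a square mod `p`; for odd `p` quadratic reciprocity turns this into `p` being a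
square mod `5`, which fails for `p ≡ 2, 3 (mod 5)`, and over `F₂` there is no root at all. So
every nonzero codeword has rank exactly `2`, while the code has dimension `2r` because `φ` is
injective and `[F_{p²} : F_p] = 2`.
-/

/-- The 2×2r matrix whose i-th 2×2 block is [[dᵢ, cᵢ],[cᵢ+dᵢ, dᵢ]]. -/
def blockPhi (p r : ℕ) (c d : Fin r → ZMod p) : Matrix (Fin 2) (Fin (2 * r)) (ZMod p) :=
  Matrix.of fun u j =>
    if u = (0 : Fin 2) then
      (if (j : ℕ) % 2 = 0 then d ⟨(j : ℕ) / 2, by have := j.isLt; omega⟩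
       else c ⟨(j : ℕ) / 2, by have := j.isLt; omega⟩)
    else
      (if (j : ℕ) % 2 = 0 then
        c ⟨(j : ℕ) / 2, by have := j.isLt; omega⟩ + d ⟨(j : ℕ) / 2, by have := j.isLt; omega⟩
       else d ⟨(j : ℕ) / 2, by have := j.isLt; omega⟩)

theorem isSquare_five_of_mul_self_eq_add_one {R : Type*} [CommRing R] {x : R}
    (hx : x * x = x + 1) : IsSquare (5 : R) :=
  ⟨2 * x - 1, by linear_combination -4 * hx⟩

namespace ZMod

variable {p : ℕ} [Fact p.Prime]

theorem not_isSquare_five (hp2 : p ≠ 2) (h5 : p % 5 = 2 ∨ p % 5 = 3) :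
    ¬IsSquare (5 : ZMod p) := by
  have hrec := @exists_sq_eq_prime_iff_of_mod_four_eq_one 5 p ⟨Nat.prime_five⟩ _ rfl hp2
  rw [Nat.cast_ofNat] at hrec
  rw [← hrec, ← natCast_mod p 5]
  rcases h5 with h | h <;> rw [h] <;> decide

theorem mul_self_ne_add_one (h5 : p % 5 = 2 ∨ p % 5 = 3) (x : ZMod p) : x * x ≠ x + 1 := by
  rcases eq_or_ne p 2 with rfl | hp2
  · revert x
    decide +revert
  · exact fun hx => not_isSquare_five hp2 h5 (isSquare_five_of_mul_self_eq_add_one hx)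

theorem finrank_eq_of_card_eq_pow {V : Type*} [AddCommGroup V] [Module (ZMod p) V] [Fintype V]
    {n : ℕ} (hV : Fintype.card V = p ^ n) : Module.finrank (ZMod p) V = n := by
  have hcard := Module.card_eq_pow_finrank (K := ZMod p) (V := V)
  rw [card, hV] at hcard
  exact Nat.pow_right_injective (Fact.out : p.Prime).two_le hcard.symm

end ZMod

theorem det_ne_zero_of_forall_mul_self_ne_add_one {F : Type*} [Field F]
    (h : ∀ x : F, x * x ≠ x + 1) {c d : F} (hcd : c ≠ 0 ∨ d ≠ 0) :
    !![d, c; c + d, d].det ≠ 0 := by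
  rw [Matrix.det_fin_two_of]
  rcases eq_or_ne c 0 with rfl | hc
  · simpa using hcd
  · intro hdet
    apply h (d / c)
    field_simp
    linear_combination hdet

section blockPhi

variable {p r : ℕ}

theorem blockPhi_submatrix (c d : Fin r → ZMod p) (i : Fin r) :
    (blockPhi p r c d).submatrix id (fun v : Fin 2 => ⟨2 * i + v, by omega⟩) =
      !![d i, c i; c i + d i, d i] := by
  ext u v
  fin_cases u <;> fin_cases v <;>
    simp [blockPhi, Nat.mul_mod_right] <;>
    · congr 1
      exact Fin.ext (by simp; omega)

theorem blockPhi_zero_zero : blockPhi p r 0 0 = 0 := by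
  ext u j
  simp [blockPhi]

variable [Fact p.Prime] (h : ∀ x : ZMod p, x * x ≠ x + 1)
include h

theorem two_le_rank_blockPhi {c d : Fin r → ZMod p} {i : Fin r} (hi : c i ≠ 0 ∨ d i ≠ 0) :
    2 ≤ (blockPhi p r c d).rank := by
  have hunit := (Matrix.isUnit_iff_isUnit_det _).mpr
    (det_ne_zero_of_forall_mul_self_ne_add_one h hi).isUnit
  calc 2 = (!![d i, c i; c i + d i, d i]).rank := by simp [Matrix.rank_of_isUnit _ hunit]
    _ ≤ (blockPhi p r c d).rank := by
      rw [← blockPhi_submatrix]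
      exact Matrix.rank_submatrix_le _ _ _

theorem rank_blockPhi_eq_two {c d : Fin r → ZMod p} (hcd : blockPhi p r c d ≠ 0) :
    (blockPhi p r c d).rank = 2 := by
  refine le_antisymm (Matrix.rank_le_height _) ?_
  obtain ⟨i, hi⟩ : ∃ i, c i ≠ 0 ∨ d i ≠ 0 := by
    by_contra! hzero
    obtain ⟨rfl, rfl⟩ : c = 0 ∧ d = 0 :=
      ⟨funext fun i => (hzero i).1, funext fun i => (hzero i).2⟩
    exact hcd blockPhi_zero_zero
  exact two_le_rank_blockPhi h hi

end blockPhi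

/-- The rank-metric code φ_O((F_{p²})ʳ) attains the Singleton bound: its dimension
equals min{2(2r-δ+1), 2r(2-δ+1)} with δ = 2, and its minimum rank distance is 2;
hence it is an MRD code. -/
theorem stmt_8 (p : ℕ) (hp : p.Prime) (h5 : p % 5 = 2 ∨ p % 5 = 3) (r : ℕ) (hr : 1 ≤ r)
    (K : Type) [Field K] [Fintype K] [Algebra (ZMod p) K]
    (hK : Fintype.card K = p ^ 2) (ω : K)
    (hω : ∀ x : K, ∃! cd : ZMod p × ZMod p,
      x = algebraMap (ZMod p) K cd.1 + cd.2 • ω)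
    (φ : (Fin r → K) →ₗ[ZMod p] Matrix (Fin 2) (Fin (2 * r)) (ZMod p))
    (hφ : ∀ c d : Fin r → ZMod p,
      φ (fun i => algebraMap (ZMod p) K (c i) + d i • ω) = blockPhi p r c d)
    (hinj : Function.Injective φ) :
    sInf {n : ℕ | ∃ M ∈ LinearMap.range φ, M ≠ 0 ∧ n = M.rank} = 2 ∧
    Module.finrank (ZMod p) (LinearMap.range φ) =
      min (2 * (2 * r - 2 + 1)) (2 * r * (2 - 2 + 1)) := by
  have : Fact p.Prime := ⟨hp⟩
  have hrank : ∀ M ∈ LinearMap.range φ, M ≠ 0 → M.rank = 2 := by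
    rintro _ ⟨v, rfl⟩ hv
    choose cd hcd using fun i => (hω (v i)).exists
    rw [show v = _ from funext hcd, hφ] at hv ⊢
    exact rank_blockPhi_eq_two (ZMod.mul_self_ne_add_one h5) hv
  set v₀ : Fin r → K := Pi.single ⟨0, hr⟩ 1
  have hv₀ : φ v₀ ≠ 0 := (map_ne_zero_iff φ hinj).mpr (by simp [v₀])
  have hset : {n : ℕ | ∃ M ∈ LinearMap.range φ, M ≠ 0 ∧ n = M.rank} = {2} := by
    ext n
    constructor
    · rintro ⟨M, hM, hM0, rfl⟩
      exact hrank M hM hM0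
    · rintro rfl
      exact ⟨φ v₀, φ.mem_range_self v₀, hv₀, (hrank _ (φ.mem_range_self v₀) hv₀).symm⟩
  refine ⟨by rw [hset, csInf_singleton], ?_⟩
  rw [LinearMap.finrank_range_of_inj hinj, Module.finrank_pi_fintype,
    ZMod.finrank_eq_of_card_eq_pow hK, Finset.sum_const, Finset.card_univ, Fintype.card_fin,
    smul_eq_mul]
  omega
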